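/- Let C_2 be a cyclic group of order two acting trivially on the integers ℤ. Then for every odd natural number n ≥ 1, the group homology H_n(C_2, ℤ) is isomorphic to ℤ/2, and for every even natural number n ≥ 2, the group homology H_n(C_2, ℤ) is the zero group. -/

import Mathlib

open CategoryTheory

noncomputable section

/-- `C₂`, a cyclic group of order two. -/
abbrev C2 : Type := Multiplicative (ZMod 2)

/-- The integral group ring `ℤ[C₂]`. -/
abbrev ZC2 : Type := MonoidAlgebra ℤ C2

/-- The augmentation `ℤ[C₂] → ℤ`, corresponding to the trivial action of `C₂` on `ℤ`. -/
def augmentation : ZC2 →ₐ[ℤ] ℤ :=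
  MonoidAlgebra.lift ℤ ℤ C2 1

/-- The integers `ℤ`, regarded as a trivial `C₂`-module, i.e. as a module over the
integral group ring `ℤ[C₂]` via the augmentation. -/
def TrivialZ : Type := ℤ

instance : AddCommGroup TrivialZ := inferInstanceAs (AddCommGroup ℤ)

instance : Module ℤ TrivialZ := inferInstanceAs (Module ℤ ℤ)

instance : Module ZC2 TrivialZ := Module.compHom TrivialZ augmentation.toRingHom

/-- Group homology `H_n(C₂, ℤ)` of the cyclic group of order two with coefficients in the
trivial module `ℤ`, defined as `Tor_n` over the integral group ring `ℤ[C₂]`. -/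
def groupHomologyC2Z (n : ℕ) : ModuleCat ZC2 :=
  ((Tor (ModuleCat ZC2) n).obj (ModuleCat.of ZC2 TrivialZ)).obj
    (ModuleCat.of ZC2 TrivialZ)

/-! The group ring `ℤ[C₂] = ℤ[g]/(g² - 1)` has the `2`-periodic free resolution
`⋯ → ℤ[C₂] --(1+g)--> ℤ[C₂] --(g-1)--> ℤ[C₂] → ℤ`: over `ℤ[C₂]`, the annihilator of each of
`1 + g` and `g - 1` is the principal ideal generated by the other. Tensoring it with the trivial
module `ℤ`, on which `g` acts as `1`, gives `⋯ → ℤ --2--> ℤ --0--> ℤ`, whose homology is `ℤ/2` in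
odd degrees and `0` in positive even degrees. -/

universe u

lemma ComplexShape.down_nat_rel_next {j : ℕ} (hj : j ≠ 0) :
    (ComplexShape.down ℕ).Rel j ((ComplexShape.down ℕ).next j) := by
  obtain ⟨k, rfl⟩ := Nat.exists_eq_succ_of_ne_zero hj
  simp [ChainComplex.next_nat_succ]

section PeriodicComplex

variable {R : Type*} [CommRing R] {C : Type*} [Category C] [Preadditive C] [Linear R C]

/-- `⋯ --a--> A --b--> A --a--> A --b--> A`: the differential out of an odd degree is `b`. -/
abbrev periodicComplex (A : C) {a b : R} (hab : a * b = 0) : ChainComplex C ℕ :=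
  HomologicalComplex.alternatingConst A (φ := a • 𝟙 A) (ψ := b • 𝟙 A)
    (by simp [smul_smul, mul_comm b, hab]) (by simp [smul_smul, hab])
    fun _ _ => ComplexShape.down_nat_odd_add

def mapPeriodicComplexIso {D : Type*} [Category D] [Preadditive D] [Linear R D]
    (F : C ⥤ D) [F.Additive] [F.Linear R] {A : C} {B : D} (e : F.obj A ≅ B)
    {a b : R} (hab : a * b = 0) :
    (F.mapHomologicalComplex _).obj (periodicComplex A hab) ≅ periodicComplex B hab :=
  HomologicalComplex.Hom.isoOfComponents (fun _ => e) (by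
    rintro i j (rfl : j + 1 = i)
    change e.hom ≫ (if _ then _ else _) = F.map (if _ then _ else _) ≫ e.hom
    split_ifs <;> simp)

end PeriodicComplex

section PeriodicResolution

variable {R : Type u} [CommRing R] {a b : R} (hab : a * b = 0)

lemma periodicComplex_exactAt_succ (ha : ∀ x : R, a * x = 0 → ∃ y, b * y = x)
    (hb : ∀ x : R, b * x = 0 → ∃ y, a * y = x) (n : ℕ) :
    (periodicComplex (ModuleCat.of R R) hab).ExactAt (n + 1) := by
  rw [HomologicalComplex.exactAt_iff' _ (n + 2) (n + 1) n (by simp) (by simp)]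
  rcases Nat.even_or_odd (n + 1) with hn | hn
  · rw [ShortComplex.exact_iff_of_iso (HomologicalComplex.alternatingConstScIsoEven _ _ _ _
      (by simp) (by simp) hn), ShortComplex.moduleCat_exact_iff]
    exact ha
  · rw [ShortComplex.exact_iff_of_iso (HomologicalComplex.alternatingConstScIsoOdd _ _ _ _
      (by simp) (by simp) hn), ShortComplex.moduleCat_exact_iff]
    exact hb

def periodicResolution (ha : ∀ x : R, a * x = 0 → ∃ y, b * y = x)
    (hb : ∀ x : R, b * x = 0 → ∃ y, a * y = x) {M : Type u} [AddCommGroup M] [Module R M]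
    (ε : R →ₗ[R] M) (hε : Function.Surjective ε) (hεb : ε b = 0)
    (hker : ∀ x, ε x = 0 → ∃ y, b * y = x) :
    ProjectiveResolution (ModuleCat.of R M) where
  complex := periodicComplex (ModuleCat.of R R) hab
  projective _ := inferInstanceAs (Projective (ModuleCat.of R R))
  π := (ChainComplex.toSingle₀Equiv _ _).symm ⟨ModuleCat.ofHom ε,
    ModuleCat.hom_ext (LinearMap.ext fun (x : R) => by
      change ε (b * x) = 0
      rw [mul_comm, ← smul_eq_mul, map_smul, hεb, smul_zero])⟩
  quasiIso := ⟨fun n => by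
    cases n with
    | zero =>
      rw [ChainComplex.quasiIsoAt₀_iff, ShortComplex.quasiIso_iff_of_zeros' _ rfl rfl rfl]
      constructor
      · rw [ShortComplex.moduleCat_exact_iff]
        exact hker
      · rw [ModuleCat.epi_iff_surjective]
        exact hε
    | succ n =>
      rw [quasiIsoAt_iff_exactAt' (hL := ChainComplex.exactAt_succ_single_obj ..)]
      exact periodicComplex_exactAt_succ hab ha hb n⟩

end PeriodicResolution

namespace ZC2

open MonoidAlgebra

def gen : ZC2 := of ℤ C2 (Multiplicative.ofAdd 1)

lemma gen_mul_gen : gen * gen = 1 := by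
  rw [gen, ← map_mul]
  rfl

lemma one_add_gen_mul_gen_sub_one : (1 + gen) * (gen - 1) = 0 := by
  linear_combination gen_mul_gen

lemma exists_eq_intCast_add_intCast_mul_gen (x : ZC2) : ∃ p q : ℤ, x = p + q * gen := by
  refine ⟨x.coeff 1, x.coeff (.ofAdd 1), ?_⟩
  ext c
  have hne : (1 : C2) ≠ .ofAdd 1 := by decide
  obtain rfl | rfl : c = 1 ∨ c = .ofAdd 1 := by revert c; decide
  all_goals simp [gen, intCast_def, hne, hne.symm]

lemma eq_zero_of_intCast_add_intCast_mul_gen_eq_zero {p q : ℤ} (h : (p : ZC2) + q * gen = 0) :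
    p = 0 ∧ q = 0 := by
  have hne : (1 : C2) ≠ .ofAdd 1 := by decide
  have hp := congrArg (·.coeff 1) h
  have hq := congrArg (·.coeff (.ofAdd 1)) h
  simp [gen, intCast_def, hne, hne.symm] at hp hq
  exact ⟨hp, hq⟩

lemma intCast_add_intCast_mul_gen_of_add_eq_zero {p q : ℤ} (h : p + q = 0) :
    (p : ZC2) + q * gen = (gen - 1) * (-p : ℤ) := by
  rw [eq_neg_of_add_eq_zero_right h]
  push_cast
  ring

lemma exists_gen_sub_one_mul_eq_of_one_add_gen_mul_eq_zero {x : ZC2} (h : (1 + gen) * x = 0) :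
    ∃ y, (gen - 1) * y = x := by
  obtain ⟨p, q, rfl⟩ := exists_eq_intCast_add_intCast_mul_gen x
  have hmul : (1 + gen) * (p + q * gen) = ((p + q : ℤ) : ZC2) + (p + q : ℤ) * gen := by
    push_cast
    linear_combination q * gen_mul_gen
  rw [hmul] at h
  have hpq := (eq_zero_of_intCast_add_intCast_mul_gen_eq_zero h).1
  exact ⟨_, (intCast_add_intCast_mul_gen_of_add_eq_zero hpq).symm⟩

lemma exists_one_add_gen_mul_eq_of_gen_sub_one_mul_eq_zero {x : ZC2} (h : (gen - 1) * x = 0) :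
    ∃ y, (1 + gen) * y = x := by
  obtain ⟨p, q, rfl⟩ := exists_eq_intCast_add_intCast_mul_gen x
  have hmul : (gen - 1) * (p + q * gen) = ((q - p : ℤ) : ZC2) + (p - q : ℤ) * gen := by
    push_cast
    linear_combination q * gen_mul_gen
  rw [hmul] at h
  have hqp := (eq_zero_of_intCast_add_intCast_mul_gen_eq_zero h).1
  refine ⟨p, ?_⟩
  rw [show q = p by linarith]
  ring

lemma augmentation_gen : augmentation gen = 1 := by
  simp [augmentation, gen]

lemma exists_gen_sub_one_mul_eq_of_augmentation_eq_zero {x : ZC2} (h : augmentation x = 0) :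
    ∃ y, (gen - 1) * y = x := by
  obtain ⟨p, q, rfl⟩ := exists_eq_intCast_add_intCast_mul_gen x
  simp only [map_add, map_mul, map_intCast, augmentation_gen, mul_one] at h
  exact ⟨_, (intCast_add_intCast_mul_gen_of_add_eq_zero h).symm⟩

def augmentationₗ : ZC2 →ₗ[ZC2] TrivialZ where
  toFun x := show ℤ from augmentation x
  map_add' := map_add augmentation
  map_smul' := map_mul augmentation

def trivialZResolution : ProjectiveResolution (ModuleCat.of ZC2 TrivialZ) :=
  periodicResolution one_add_gen_mul_gen_sub_one
    (fun _ => exists_gen_sub_one_mul_eq_of_one_add_gen_mul_eq_zero)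
    (fun _ => exists_one_add_gen_mul_eq_of_gen_sub_one_mul_eq_zero)
    augmentationₗ (fun z => ⟨(show ℤ from z : ZC2), map_intCast augmentation z⟩)
    (show augmentation (gen - 1) = (0 : ℤ) by simp [augmentation_gen])
    (fun _ => exists_gen_sub_one_mul_eq_of_augmentation_eq_zero)

end ZC2

namespace TrivialZ

open ZC2

lemma one_add_gen_smul (x : TrivialZ) : (1 + gen) • x = (2 : ℤ) • x := by
  change augmentation (1 + gen) • x = _
  rw [map_add, map_one, augmentation_gen]
  rfl

lemma gen_sub_one_smul (x : TrivialZ) : (gen - 1) • x = 0 := by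
  change augmentation (gen - 1) • x = _
  rw [map_sub, map_one, augmentation_gen, sub_self, zero_smul]

lemma isZero_homology_periodicComplex_of_even {j : ℕ} (hj : Even j) (hj₀ : j ≠ 0) :
    Limits.IsZero
      ((periodicComplex (ModuleCat.of ZC2 TrivialZ) one_add_gen_mul_gen_sub_one).homology j) := by
  refine Limits.IsZero.of_iso ?_ (HomologicalComplex.alternatingConstHomologyIsoEven _ _ _ _
    (by simp) (ComplexShape.down_nat_rel_next hj₀) hj)
  rw [← ShortComplex.exact_iff_isZero_homology, ShortComplex.moduleCat_exact_iff]
  intro (x : TrivialZ) hx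
  change (1 + gen) • x = 0 at hx
  rw [one_add_gen_smul] at hx
  have hx₀ : x = 0 := by
    change (2 : ℤ) * (show ℤ from x) = 0 at hx
    change (show ℤ from x) = 0
    omega
  exact ⟨0, by rw [map_zero, hx₀]⟩

def equivInt : TrivialZ ≃+ ℤ := AddEquiv.refl ℤ

lemma map_range_one_add_gen_smul :
    (LinearMap.range ((1 + gen) • 𝟙 (ModuleCat.of ZC2 TrivialZ)).hom).toAddSubgroup.map
      equivInt.toAddMonoidHom = AddSubgroup.zmultiples (2 : ℤ) := by
  ext x
  simp only [AddSubgroup.mem_map, Submodule.mem_toAddSubgroup, LinearMap.mem_range,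
    Int.mem_zmultiples_iff]
  constructor
  · rintro ⟨_, ⟨y, rfl⟩, rfl⟩
    exact ⟨y, one_add_gen_smul y⟩
  · rintro ⟨k, rfl⟩
    exact ⟨2 * k, ⟨k, one_add_gen_smul k⟩, rfl⟩

def quotientRangeOneAddGenSmulAddEquiv :
    (TrivialZ ⧸ LinearMap.range ((1 + gen) • 𝟙 (ModuleCat.of ZC2 TrivialZ)).hom) ≃+ ZMod 2 :=
  (QuotientAddGroup.congr _ _ equivInt map_range_one_add_gen_smul).trans
    (Int.quotientZMultiplesNatEquivZMod 2)

def homologyPeriodicComplexAddEquivOfOdd {j : ℕ} (hj : Odd j) :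
    (periodicComplex (ModuleCat.of ZC2 TrivialZ) one_add_gen_mul_gen_sub_one).homology j ≃+
      ZMod 2 :=
  have hg : (gen - 1) • 𝟙 (ModuleCat.of ZC2 TrivialZ) = 0 :=
    ModuleCat.hom_ext (LinearMap.ext gen_sub_one_smul)
  ((HomologicalComplex.alternatingConstHomologyIsoOdd _ _ _ _ (by simp)
    (ComplexShape.down_nat_rel_next hj.pos.ne') hj) ≪≫
    (ShortComplex.LeftHomologyData.ofHasCokernel _ hg).homologyIso ≪≫
    ModuleCat.cokernelIsoRangeQuotient _).toLinearEquiv.toAddEquiv.trans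
      quotientRangeOneAddGenSmulAddEquiv

end TrivialZ

open MonoidalCategory in
def groupHomologyC2ZIso (n : ℕ) :
    groupHomologyC2Z n ≅
      (periodicComplex (ModuleCat.of ZC2 TrivialZ) ZC2.one_add_gen_mul_gen_sub_one).homology n :=
  ZC2.trivialZResolution.isoLeftDerivedObj _ n ≪≫
    (HomologicalComplex.homologyFunctor _ _ n).mapIso
      (mapPeriodicComplexIso ((tensoringLeft _).obj _) (ρ_ _) _)

/-- For every odd natural number `n ≥ 1`, the group homology `H_n(C₂, ℤ)` is isomorphic to
`ℤ/2`, and for every even natural number `n ≥ 2`, the group homology `H_n(C₂, ℤ)` is the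
zero group. -/
theorem groupHomology_C2_Z :
    (∀ n : ℕ, 1 ≤ n → Odd n → Nonempty ((groupHomologyC2Z n) ≃+ ZMod 2)) ∧
      (∀ n : ℕ, 2 ≤ n → Even n → Subsingleton (groupHomologyC2Z n)) := by
  refine ⟨fun n _ hn => ?_, fun n hn₂ hn => ?_⟩
  · exact ⟨(groupHomologyC2ZIso n).toLinearEquiv.toAddEquiv.trans
      (TrivialZ.homologyPeriodicComplexAddEquivOfOdd hn)⟩
  · rw [← ModuleCat.isZero_iff_subsingleton]
    exact (TrivialZ.isZero_homology_periodicComplex_of_even hn (by omega)).of_iso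
      (groupHomologyC2ZIso n)

end
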